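/- Let A and B be adjacency matrices of connected undirected graphs on the same N vertices, let τ₁, τ₂ > 0 satisfy τ₁·λ(A) > 1 and τ₂·λ(B) > 1, let x* satisfy the single-virus SIS fixed point equations for (A, τ₁) and y* the single-virus SIS fixed point equations for (B, τ₂), and suppose the coexistence conditions τ₁·λ(diag(1 − y*)·A) > 1 and τ₂·λ(diag(1 − x*)·B) > 1 hold. Then every coexistence equilibrium (x̂, ŷ) for (A, B, τ₁, τ₂) satisfies, for each node i, the strict inequalities x̂_i < x*_i·(1 − ŷ_i) and ŷ_i < y*_i·(1 − x̂_i). -/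

import Mathlib

/-!
Put `z = x̂ / (1 - ŷ)`. The coexistence equation for `x̂` reads `z_i / (τ₁ (1 - z_i)) = (A x̂)_i`,
and `x̂ < z` componentwise, so `z` is a strict subsolution of the single-virus equation for
`(A, τ₁)`: `z_i / (τ₁ (1 - z_i)) < (A z)_i`. Let `c = max_j z_j / x*_j`, attained at `k`. Then
`z ≤ c x*`, and at `k`
`c x*_k / (τ₁ (1 - c x*_k)) < (A z)_k ≤ c (A x*)_k = c x*_k / (τ₁ (1 - x*_k))`,
hence `c < 1` and `z < x*`.
The bound on `ŷ` is the same argument with the two viruses exchanged.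
-/

open Matrix Finset

/-- Spectral radius of a real matrix: supremum of absolute values of its complex eigenvalues. -/
noncomputable def specRad {N : ℕ} (M : Matrix (Fin N) (Fin N) ℝ) : ℝ :=
  sSup ((fun z => ‖z‖) '' spectrum ℂ (M.map Complex.ofReal))

/-- `A` is the adjacency matrix of a connected undirected graph:
symmetric, 0/1 entries, zero diagonal, and irreducible (connectivity). -/
def IsConnectedAdjMatrix {N : ℕ} (A : Matrix (Fin N) (Fin N) ℝ) : Prop :=
  A.IsSymm ∧ (∀ i j, A i j = 0 ∨ A i j = 1) ∧ (∀ i, A i i = 0) ∧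
    (∀ i j, i ≠ j → ∃ k : ℕ, 0 < (A ^ k) i j)

/-- `x` satisfies the single-virus SIS fixed point equations for `(A, τ)`. -/
def IsSISFixedPoint {N : ℕ} (A : Matrix (Fin N) (Fin N) ℝ) (τ : ℝ)
    (x : Fin N → ℝ) : Prop :=
  (∀ i, 0 < x i ∧ x i < 1) ∧ (∀ i, ∑ j, A i j * x j = x i / (τ * (1 - x i)))

/-- `(x, y)` is a coexistence equilibrium of the bi-SIS system for `(A, B, τ₁, τ₂)`. -/
def IsCoexistenceEq {N : ℕ} (A B : Matrix (Fin N) (Fin N) ℝ) (τ₁ τ₂ : ℝ)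
    (x y : Fin N → ℝ) : Prop :=
  (∀ i, 0 < x i) ∧ (∀ i, 0 < y i) ∧ (∀ i, x i + y i < 1) ∧
    (∀ i, ∑ j, A i j * x j = x i / (τ₁ * (1 - x i - y i))) ∧
    (∀ i, ∑ j, B i j * y j = y i / (τ₂ * (1 - x i - y i)))

lemma sum_mul_lt_sum_mul_of_pos {ι : Type*} [Fintype ι] {a u v : ι → ℝ}
    (ha : ∀ j, 0 ≤ a j) (huv : ∀ j, u j < v j) (hpos : 0 < ∑ j, a j * u j) :
    ∑ j, a j * u j < ∑ j, a j * v j := by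
  obtain ⟨k, -, hk⟩ := exists_ne_zero_of_sum_ne_zero hpos.ne'
  have hak : 0 < a k := (ha k).lt_of_ne (left_ne_zero_of_mul hk).symm
  exact sum_lt_sum (fun j _ => mul_le_mul_of_nonneg_left (huv j).le (ha j))
    ⟨k, mem_univ k, mul_lt_mul_of_pos_left (huv k) hak⟩

lemma IsConnectedAdjMatrix.nonneg {N : ℕ} {A : Matrix (Fin N) (Fin N) ℝ}
    (hA : IsConnectedAdjMatrix A) (i j : Fin N) : 0 ≤ A i j :=
  (hA.2.1 i j).elim (fun h => h.ge) (fun h => h ▸ zero_le_one)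

lemma IsCoexistenceEq.symm {N : ℕ} {A B : Matrix (Fin N) (Fin N) ℝ} {τ₁ τ₂ : ℝ}
    {x y : Fin N → ℝ} (h : IsCoexistenceEq A B τ₁ τ₂ x y) :
    IsCoexistenceEq B A τ₂ τ₁ y x := by
  obtain ⟨hx, hy, hxy, hA, hB⟩ := h
  refine ⟨hy, hx, fun i => by linarith [hxy i], fun i => ?_, fun i => ?_⟩
  · rw [hB i, sub_right_comm]
  · rw [hA i, sub_right_comm]

lemma IsSISFixedPoint.lt_of_strict_subsolution {N : ℕ} {A : Matrix (Fin N) (Fin N) ℝ}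
    {τ : ℝ} {xs : Fin N → ℝ} (hxs : IsSISFixedPoint A τ xs) (hτ : 0 < τ)
    (hA : ∀ i j, 0 ≤ A i j) {z : Fin N → ℝ} (hz : ∀ i, 0 < z i ∧ z i < 1)
    (hsub : ∀ i, z i / (τ * (1 - z i)) < ∑ j, A i j * z j) (i : Fin N) : z i < xs i := by
  have hxs_pos : ∀ j, 0 < xs j := fun j => (hxs.1 j).1
  obtain ⟨k, -, hk⟩ := exists_max_image univ (fun j => z j / xs j) ⟨i, mem_univ i⟩
  set c := z k / xs k
  have hz_le : ∀ j, z j ≤ c * xs j := fun j => (div_le_iff₀ (hxs_pos j)).1 (hk j (mem_univ j))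
  have hzk : z k = c * xs k := (div_mul_cancel₀ _ (hxs_pos k).ne').symm
  have hzk_pos : 0 < c * xs k := hzk ▸ (hz k).1
  have key : c * xs k / (τ * (1 - c * xs k)) < c * xs k / (τ * (1 - xs k)) :=
    calc c * xs k / (τ * (1 - c * xs k))
        < ∑ j, A k j * z j := hzk ▸ hsub k
      _ ≤ ∑ j, A k j * (c * xs j) :=
          sum_le_sum fun j _ => mul_le_mul_of_nonneg_left (hz_le j) (hA k j)
      _ = c * xs k / (τ * (1 - xs k)) := by
          rw [mul_div_assoc, ← hxs.2 k, mul_sum]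
          exact sum_congr rfl fun j _ => by ring
  have hc : c < 1 := by
    rw [div_lt_div_iff_of_pos_left hzk_pos (mul_pos hτ (by linarith [hzk ▸ (hz k).2]))
      (mul_pos hτ (by linarith [(hxs.1 k).2]))] at key
    have hlt : c * xs k < xs k := by linarith [lt_of_mul_lt_mul_left key hτ.le]
    exact (mul_lt_iff_lt_one_left (hxs_pos k)).1 hlt
  exact (hz_le i).trans_lt (mul_lt_of_lt_one_left (hxs_pos i) hc)

lemma IsCoexistenceEq.lt_mul_one_sub {N : ℕ} {A B : Matrix (Fin N) (Fin N) ℝ} {τ₁ τ₂ : ℝ}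
    {x y xs : Fin N → ℝ} (h : IsCoexistenceEq A B τ₁ τ₂ x y) (hxs : IsSISFixedPoint A τ₁ xs)
    (hτ : 0 < τ₁) (hA : ∀ i j, 0 ≤ A i j) (i : Fin N) : x i < xs i * (1 - y i) := by
  obtain ⟨hx, hy, hxy, hA_eq, -⟩ := h
  have hy1 : ∀ j, 0 < 1 - y j := fun j => by linarith [hx j, hxy j]
  have hz : ∀ j, 0 < x j / (1 - y j) ∧ x j / (1 - y j) < 1 := fun j =>
    ⟨div_pos (hx j) (hy1 j), (div_lt_one (hy1 j)).2 (by linarith [hxy j])⟩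
  have hsub : ∀ j, x j / (1 - y j) / (τ₁ * (1 - x j / (1 - y j)))
      < ∑ k, A j k * (x k / (1 - y k)) := fun j => by
    have hAx : x j / (1 - y j) / (τ₁ * (1 - x j / (1 - y j))) = ∑ k, A j k * x k := by
      rw [hA_eq j]
      field_simp [(hy1 j).ne']
      rw [sub_right_comm]
    rw [hAx]
    refine sum_mul_lt_sum_mul_of_pos (hA j) (fun k => ?_) ?_
    · rw [lt_div_iff₀ (hy1 k)]
      exact mul_lt_of_lt_one_right (hx k) (by linarith [hy k])
    · rw [hA_eq j]
      exact div_pos (hx j) (mul_pos hτ (by linarith [hxy j]))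
  exact (div_lt_iff₀ (hy1 i)).1 (hxs.lt_of_strict_subsolution hτ hA hz hsub i)

theorem coexistence_upper_bounds_general {N : ℕ}
    (A B : Matrix (Fin N) (Fin N) ℝ) (hA : IsConnectedAdjMatrix A) (hB : IsConnectedAdjMatrix B)
    (τ₁ τ₂ : ℝ) (hτ₁ : 0 < τ₁) (hτ₂ : 0 < τ₂)
    (xstar ystar : Fin N → ℝ)
    (hxs : IsSISFixedPoint A τ₁ xstar) (hys : IsSISFixedPoint B τ₂ ystar)
    (xhat yhat : Fin N → ℝ)
    (hce : IsCoexistenceEq A B τ₁ τ₂ xhat yhat) :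
    ∀ i, xhat i < xstar i * (1 - yhat i) ∧ yhat i < ystar i * (1 - xhat i) := fun i =>
  ⟨hce.lt_mul_one_sub hxs hτ₁ hA.nonneg i, hce.symm.lt_mul_one_sub hys hτ₂ hB.nonneg i⟩

/-- **Corollary 1.** Under the single-virus survival conditions
`τ₁·λ(A) > 1`, `τ₂·λ(B) > 1` and the coexistence conditions
`τ₁·λ(diag(1 − y*)·A) > 1`, `τ₂·λ(diag(1 − x*)·B) > 1`, every coexistence equilibrium
`(x̂, ŷ)` for `(A, B, τ₁, τ₂)` satisfies, for each node `i`, the strict inequalities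
`x̂_i < x*_i·(1 − ŷ_i)` and `ŷ_i < y*_i·(1 − x̂_i)`. -/
theorem coexistence_upper_bounds {N : ℕ}
    (A B : Matrix (Fin N) (Fin N) ℝ) (hA : IsConnectedAdjMatrix A) (hB : IsConnectedAdjMatrix B)
    (τ₁ τ₂ : ℝ) (hτ₁ : 0 < τ₁) (hτ₂ : 0 < τ₂)
    (hA1 : 1 < τ₁ * specRad A) (hB1 : 1 < τ₂ * specRad B)
    (xstar ystar : Fin N → ℝ)
    (hxs : IsSISFixedPoint A τ₁ xstar) (hys : IsSISFixedPoint B τ₂ ystar)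
    (hcoex1 : 1 < τ₁ * specRad (Matrix.diagonal (fun i => 1 - ystar i) * A))
    (hcoex2 : 1 < τ₂ * specRad (Matrix.diagonal (fun i => 1 - xstar i) * B))
    (xhat yhat : Fin N → ℝ)
    (hce : IsCoexistenceEq A B τ₁ τ₂ xhat yhat) :
    ∀ i, xhat i < xstar i * (1 - yhat i) ∧ yhat i < ystar i * (1 - xhat i) :=
  coexistence_upper_bounds_general A B hA hB τ₁ τ₂ hτ₁ hτ₂ xstar ystar hxs hys xhat yhat hce
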